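/- Let X be a complex Banach space, σ a nonempty compact subset of ℂ, and T a bounded linear operator on X with a B(σ) functional calculus Φ. For any Borel set Δ ⊆ ℂ, let P = Φ(χ_{Δ∩σ}), where χ_{Δ∩σ} is the characteristic function of Δ ∩ σ on σ. Then P² = P, P commutes with T, the range of P is a closed T-invariant subspace of X, and the spectrum of the restriction of T to the range of P is contained in the closure of Δ. -/

import Mathlib

/-- A function on `σ` is a member of `B(σ)` if it is Borel-measurable and bounded. -/
def IsBoundedBorel {σ : Set ℂ} (f : ↥σ → ℂ) : Prop :=
  Measurable f ∧ ∃ M : ℝ, ∀ z : ↥σ, ‖f z‖ ≤ M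

/-- The characteristic function of `Δ ∩ σ`, viewed as a function on `σ`. -/
noncomputable def charFun (σ Δ : Set ℂ) : ↥σ → ℂ :=
  Set.indicator (Subtype.val ⁻¹' Δ) (fun _ => (1 : ℂ))

/-- The restriction of a continuous linear operator to an invariant subspace. -/
def ContinuousLinearMap.restrictSubmodule {X : Type*} [NormedAddCommGroup X]
    [NormedSpace ℂ X] (T : X →L[ℂ] X) (p : Submodule ℂ X)
    (h : ∀ x ∈ p, T x ∈ p) : ↥p →L[ℂ] ↥p :=
  ContinuousLinearMap.codRestrict (T.comp p.subtypeL) p (fun x => h x x.2)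

/-!
Since `Φ` is multiplicative and `χ_Δ² = χ_Δ`, `P = Φ(χ_Δ)` is an idempotent commuting with
`T = Φ(z)`, so its range is closed and `T`-invariant. For `μ ∉ closure Δ` the function
`g = χ_Δ · (μ - z)⁻¹` is bounded, and `g · (μ - z) = χ_Δ = χ_Δ · g`; applying `Φ` shows that
`Φ(g)` inverts `μ - T` on the range of `P`.
-/

namespace ContinuousLinearMap

variable {X : Type*} [NormedAddCommGroup X] [NormedSpace ℂ X]

theorem notMem_spectrum_restrictSubmodule {T Q : X →L[ℂ] X} {p : Submodule ℂ X}
    (hT : ∀ x ∈ p, T x ∈ p) (hQ : ∀ x ∈ p, Q x ∈ p) {μ : ℂ}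
    (hQA : ∀ x ∈ p, Q (μ • x - T x) = x) (hAQ : ∀ x ∈ p, μ • Q x - T (Q x) = x) :
    μ ∉ spectrum ℂ (T.restrictSubmodule p hT) := by
  refine spectrum.notMem_iff.mpr <|
    isUnit_iff_exists.mpr ⟨Q.restrictSubmodule p hQ, ?_, ?_⟩ <;> ext x <;>
    simp only [Algebra.algebraMap_eq_smul_one]
  · exact hAQ x x.2
  · exact hQA x x.2

theorem notMem_spectrum_restrictSubmodule_range {P Q T : X →L[ℂ] X} (hP : IsIdempotentElem P)
    (hT : ∀ x ∈ LinearMap.range (P : X →ₗ[ℂ] X), T x ∈ LinearMap.range (P : X →ₗ[ℂ] X))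
    {μ : ℂ} (hPQ : P * Q = Q) (hQA : Q * (algebraMap ℂ _ μ - T) = P)
    (hAQ : (algebraMap ℂ _ μ - T) * Q = P) :
    μ ∉ spectrum ℂ (T.restrictSubmodule (LinearMap.range (P : X →ₗ[ℂ] X)) hT) := by
  have hfix {x : X} : x ∈ LinearMap.range (P : X →ₗ[ℂ] X) ↔ P x = x :=
    LinearMap.IsIdempotentElem.mem_range_iff (IsIdempotentElem.toLinearMap hP)
  refine notMem_spectrum_restrictSubmodule (Q := Q) hT (fun x _ => hfix.mpr ?_) (fun x hx => ?_)
    (fun x hx => ?_)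
  · simpa using congr($hPQ x)
  · simpa [Algebra.algebraMap_eq_smul_one, hfix.mp hx] using congr($hQA x)
  · simpa [Algebra.algebraMap_eq_smul_one, hfix.mp hx] using congr($hAQ x)

end ContinuousLinearMap

section BoundedBorel

variable {σ : Set ℂ}

theorem isBoundedBorel_one : IsBoundedBorel (1 : ↥σ → ℂ) :=
  ⟨measurable_const, 1, fun _ => by simp⟩

theorem isBoundedBorel_coe (hσ : Bornology.IsBounded σ) :
    IsBoundedBorel (fun z : ↥σ => (z : ℂ)) := by
  obtain ⟨M, hM⟩ := hσ.exists_norm_le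
  exact ⟨measurable_subtype_coe, M, fun z => hM z z.2⟩

theorem IsBoundedBorel.const_smul {f : ↥σ → ℂ} (hf : IsBoundedBorel f) (c : ℂ) :
    IsBoundedBorel (c • f) := by
  obtain ⟨hfm, M, hM⟩ := hf
  refine ⟨hfm.const_smul c, ‖c‖ * M, fun z => ?_⟩
  rw [Pi.smul_apply, norm_smul]
  exact mul_le_mul_of_nonneg_left (hM z) (norm_nonneg c)

theorem IsBoundedBorel.add {f g : ↥σ → ℂ} (hf : IsBoundedBorel f) (hg : IsBoundedBorel g) :
    IsBoundedBorel (f + g) := by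
  obtain ⟨hfm, M, hM⟩ := hf
  obtain ⟨hgm, N, hN⟩ := hg
  exact ⟨hfm.add hgm, M + N, fun z => (norm_add_le _ _).trans (add_le_add (hM z) (hN z))⟩

theorem const_sub_coe_eq (μ : ℂ) :
    (fun z : ↥σ => μ - z) = μ • (1 : ↥σ → ℂ) + (-1 : ℂ) • fun z : ↥σ => (z : ℂ) := by
  ext z
  simp [sub_eq_add_neg]

theorem isBoundedBorel_const_sub_coe (hσ : Bornology.IsBounded σ) (μ : ℂ) :
    IsBoundedBorel (fun z : ↥σ => μ - z) :=
  const_sub_coe_eq μ ▸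
    (isBoundedBorel_one.const_smul μ).add ((isBoundedBorel_coe hσ).const_smul _)

theorem isBoundedBorel_charFun {Δ : Set ℂ} (hΔ : MeasurableSet Δ) :
    IsBoundedBorel (charFun σ Δ) := by
  refine ⟨measurable_const.indicator (measurable_subtype_coe hΔ), 1, fun z => ?_⟩
  by_cases hz : (z : ℂ) ∈ Δ <;> simp [charFun, hz]

theorem charFun_mul_self (Δ : Set ℂ) : charFun σ Δ * charFun σ Δ = charFun σ Δ := by
  ext z
  by_cases hz : (z : ℂ) ∈ Δ <;> simp [charFun, hz]

noncomputable def resolventIndicator (σ Δ : Set ℂ) (μ : ℂ) : ↥σ → ℂ :=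
  Set.indicator (Subtype.val ⁻¹' Δ) (fun z => (μ - z)⁻¹)

theorem isBoundedBorel_resolventIndicator {Δ : Set ℂ} (hΔ : MeasurableSet Δ) {μ : ℂ}
    (hμ : μ ∉ closure Δ) : IsBoundedBorel (resolventIndicator σ Δ μ) := by
  refine ⟨((measurable_const.sub measurable_subtype_coe).inv).indicator
    (measurable_subtype_coe hΔ), (Metric.infDist μ Δ)⁻¹, fun z => ?_⟩
  by_cases hz : (z : ℂ) ∈ Δ
  · have hpos : 0 < Metric.infDist μ Δ := by
      rw [← Metric.infDist_closure]
      exact (isClosed_closure.notMem_iff_infDist_pos (Set.nonempty_of_mem hz).closure).mp hμ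
    simpa [resolventIndicator, hz, ← dist_eq_norm] using
      inv_anti₀ hpos (Metric.infDist_le_dist_of_mem hz)
  · simp [resolventIndicator, hz, Metric.infDist_nonneg]

theorem resolventIndicator_mul_sub {Δ : Set ℂ} {μ : ℂ} (hμ : μ ∉ Δ) :
    resolventIndicator σ Δ μ * (fun z : ↥σ => μ - z) = charFun σ Δ := by
  ext z
  by_cases hz : (z : ℂ) ∈ Δ
  · have : μ - z ≠ 0 := sub_ne_zero.mpr fun h => hμ (h ▸ hz)
    simp [resolventIndicator, charFun, hz, this]
  · simp [resolventIndicator, charFun, hz]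

theorem charFun_mul_resolventIndicator (Δ : Set ℂ) (μ : ℂ) :
    charFun σ Δ * resolventIndicator σ Δ μ = resolventIndicator σ Δ μ := by
  ext z
  by_cases hz : (z : ℂ) ∈ Δ <;> simp [resolventIndicator, charFun, hz]

end BoundedBorel

theorem map_const_sub_coe {σ : Set ℂ} {X : Type*} [NormedAddCommGroup X] [NormedSpace ℂ X]
    {T : X →L[ℂ] X} {Φ : (↥σ → ℂ) → (X →L[ℂ] X)}
    (hadd : ∀ f g : ↥σ → ℂ, IsBoundedBorel f → IsBoundedBorel g → Φ (f + g) = Φ f + Φ g)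
    (hsmul : ∀ (c : ℂ) (f : ↥σ → ℂ), IsBoundedBorel f → Φ (c • f) = c • Φ f)
    (hone : Φ 1 = 1) (hT : Φ (fun z : ↥σ => (z : ℂ)) = T) (hσ : Bornology.IsBounded σ) (μ : ℂ) :
    Φ (fun z : ↥σ => μ - z) = algebraMap ℂ (X →L[ℂ] X) μ - T := by
  have h1 := isBoundedBorel_one (σ := σ)
  have hid := isBoundedBorel_coe hσ
  rw [const_sub_coe_eq, hadd _ _ (h1.const_smul μ) (hid.const_smul _), hsmul _ _ h1,
    hsmul _ _ hid, hone, hT, Algebra.algebraMap_eq_smul_one]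
  module

theorem stmt_10_general {X : Type*} [NormedAddCommGroup X] [NormedSpace ℂ X]
    (σ : Set ℂ) (hσc : IsCompact σ)
    (T : X →L[ℂ] X)
    (Φ : (↥σ → ℂ) → (X →L[ℂ] X))
    (hadd : ∀ f g : ↥σ → ℂ, IsBoundedBorel f → IsBoundedBorel g → Φ (f + g) = Φ f + Φ g)
    (hsmul : ∀ (c : ℂ) (f : ↥σ → ℂ), IsBoundedBorel f → Φ (c • f) = c • Φ f)
    (hmul : ∀ f g : ↥σ → ℂ, IsBoundedBorel f → IsBoundedBorel g → Φ (f * g) = Φ f * Φ g)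
    (hone : Φ 1 = 1)
    (hT : Φ (fun z : ↥σ => (z : ℂ)) = T)
    (Δ : Set ℂ) (hΔ : MeasurableSet Δ) :
    Φ (charFun σ Δ) * Φ (charFun σ Δ) = Φ (charFun σ Δ) ∧
    Commute (Φ (charFun σ Δ)) T ∧
    IsClosed (Set.range (Φ (charFun σ Δ))) ∧
    ∃ hinv : ∀ x ∈ LinearMap.range (Φ (charFun σ Δ) : X →ₗ[ℂ] X), T x ∈ LinearMap.range (Φ (charFun σ Δ) : X →ₗ[ℂ] X),
      spectrum ℂ (T.restrictSubmodule (LinearMap.range (Φ (charFun σ Δ) : X →ₗ[ℂ] X)) hinv)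
        ⊆ closure Δ := by
  have hχ := isBoundedBorel_charFun (σ := σ) hΔ
  have hid := isBoundedBorel_coe hσc.isBounded
  have hP : IsIdempotentElem (Φ (charFun σ Δ)) := by
    rw [IsIdempotentElem, ← hmul _ _ hχ hχ, charFun_mul_self]
  have hPT : Commute (Φ (charFun σ Δ)) T := by
    rw [← hT, commute_iff_eq, ← hmul _ _ hχ hid, ← hmul _ _ hid hχ, mul_comm]
  have hinv := ((ContinuousLinearMap.IsIdempotentElem.commute_iff hP).mp hPT).1
  refine ⟨hP, hPT, ContinuousLinearMap.IsIdempotentElem.isClosed_range hP, hinv,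
    fun μ hμ => by_contra fun hμΔ => ?_⟩
  have hg := isBoundedBorel_resolventIndicator (σ := σ) hΔ hμΔ
  have hA := isBoundedBorel_const_sub_coe hσc.isBounded μ
  have hgA := resolventIndicator_mul_sub (σ := σ) fun h => hμΔ (subset_closure h)
  have hΦA := map_const_sub_coe hadd hsmul hone hT hσc.isBounded μ
  refine ContinuousLinearMap.notMem_spectrum_restrictSubmodule_range hP hinv
    (Q := Φ (resolventIndicator σ Δ μ)) ?_ ?_ ?_ hμ
  · rw [← hmul _ _ hχ hg, charFun_mul_resolventIndicator]
  · rw [← hΦA, ← hmul _ _ hg hA, hgA]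
  · rw [← hΦA, ← hmul _ _ hA hg, mul_comm, hgA]

/-- Let `X` be a complex Banach space, `σ ⊆ ℂ` nonempty and compact, and `T ∈ L(X)` an
operator with a `B(σ)` functional calculus `Φ`. For a Borel set `Δ ⊆ ℂ`, the operator
`P = Φ(χ_{Δ ∩ σ})` is a projection commuting with `T`, its range is a closed `T`-invariant
subspace of `X`, and the spectrum of the restriction of `T` to the range of `P` is
contained in the closure of `Δ`. -/
theorem stmt_10 {X : Type*} [NormedAddCommGroup X] [NormedSpace ℂ X] [CompleteSpace X]
    (σ : Set ℂ) (hσc : IsCompact σ) (hσne : σ.Nonempty)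
    (T : X →L[ℂ] X)
    (Φ : (↥σ → ℂ) → (X →L[ℂ] X))
    (hadd : ∀ f g : ↥σ → ℂ, IsBoundedBorel f → IsBoundedBorel g → Φ (f + g) = Φ f + Φ g)
    (hsmul : ∀ (c : ℂ) (f : ↥σ → ℂ), IsBoundedBorel f → Φ (c • f) = c • Φ f)
    (hmul : ∀ f g : ↥σ → ℂ, IsBoundedBorel f → IsBoundedBorel g → Φ (f * g) = Φ f * Φ g)
    (hone : Φ 1 = 1)
    (hT : Φ (fun z : ↥σ => (z : ℂ)) = T)
    (hbdd : ∃ C : ℝ, ∀ f : ↥σ → ℂ, IsBoundedBorel f → ‖Φ f‖ ≤ C * ⨆ z : ↥σ, ‖f z‖)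
    (Δ : Set ℂ) (hΔ : MeasurableSet Δ) :
    Φ (charFun σ Δ) * Φ (charFun σ Δ) = Φ (charFun σ Δ) ∧
    Commute (Φ (charFun σ Δ)) T ∧
    IsClosed (Set.range (Φ (charFun σ Δ))) ∧
    ∃ hinv : ∀ x ∈ LinearMap.range (Φ (charFun σ Δ) : X →ₗ[ℂ] X), T x ∈ LinearMap.range (Φ (charFun σ Δ) : X →ₗ[ℂ] X),
      spectrum ℂ (T.restrictSubmodule (LinearMap.range (Φ (charFun σ Δ) : X →ₗ[ℂ] X)) hinv)
        ⊆ closure Δ :=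
  stmt_10_general σ hσc T Φ hadd hsmul hmul hone hT Δ hΔ
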